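/- Let d ≥ 1, N ≥ 1, and let n₁,…,n_N ∈ ℤ^d \ {0} be an N-sparse sequence, i.e. |n_{j+1}|₂ / |n_j|₂ ≥ 3^N for 1 ≤ j ≤ N−1. Then for every 1 ≤ l ≤ N and every ξ ∈ {−1,0,1}^N with ξ_k = 0 for all k ≥ l, the vector M(ξ) = ∑_{j=1}^N ξ_j n_j satisfies |M(ξ)^{(i)}| ≤ (3/(2·3^N)) · |n_l|₂ for every coordinate i ∈ {1,…,d}. In particular, if additionally 3^N > (3/2)√d and every n_j satisfies |n_j^{(1)}| = max_k |n_j^{(k)}|, then M(ξ)^{(1)} ≠ 0 for every nonzero ξ ∈ {−1,0,1}^N. -/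

import Mathlib

noncomputable section

open MeasureTheory Finset

/-- The open-closed unit cube `(0,1]^d` in `ℝ^d`, a fundamental domain for `𝕋^d = (ℝ/ℤ)^d`. -/
def cube (d : ℕ) : Set (Fin d → ℝ) := Set.univ.pi fun _ => Set.Ioc (0:ℝ) 1

/-- The character `e^{2πi⟨n,t⟩}` on the torus. -/
def charF (d : ℕ) (n : Fin d → ℤ) (t : Fin d → ℝ) : ℂ :=
  Complex.exp (2 * (Real.pi : ℂ) * Complex.I * ((∑ i, (n i : ℝ) * t i : ℝ) : ℂ))

/-- The trigonometric polynomial with Fourier coefficients `c` (assumed finitely supported). -/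
def trigEval {d : ℕ} (c : (Fin d → ℤ) → ℂ) (t : Fin d → ℝ) : ℂ :=
  ∑ᶠ n, c n * charF d n t

/-- The `L¹(𝕋^d)` norm of a function, computed on the fundamental domain. -/
def L1Norm (d : ℕ) (f : (Fin d → ℝ) → ℂ) : ℝ := ∫ t in cube d, ‖f t‖

/-- The `L^q(𝕋^d)` norm of a function, computed on the fundamental domain. -/
def LqNorm (d : ℕ) (q : ℝ) (f : (Fin d → ℝ) → ℂ) : ℝ :=
  (∫ t in cube d, ‖f t‖ ^ q) ^ (1/q)

/-- Fourier coefficients of the partial derivative `∂f/∂x_j`: multiplication by `2πi n_j`. -/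
def derivCoeff {d : ℕ} (j : Fin d) (c : (Fin d → ℤ) → ℂ) : (Fin d → ℤ) → ℂ :=
  fun n => (2 * (Real.pi : ℂ) * Complex.I * (n j : ℂ)) * c n

/-- The Sobolev `W^{1,1}(𝕋^d)` norm of the trigonometric polynomial with coefficients `c`:
`‖f‖₁ + ∑_j ‖∂f/∂x_j‖₁`. -/
def sobNorm (d : ℕ) (c : (Fin d → ℤ) → ℂ) : ℝ :=
  L1Norm d (trigEval c) + ∑ j : Fin d, L1Norm d (trigEval (derivCoeff j c))

/-- `lam` is a `(W^{1,1}, L^q)`-multiplier on `𝕋^d` with norm at most `C`: for every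
trigonometric polynomial `f` (given by its finitely supported coefficients `c`), the
trigonometric polynomial `Tf` with coefficients `n ↦ lam n * c n` satisfies
`‖Tf‖_{L^q} ≤ C ‖f‖_{1,1}`. -/
def IsMultiplier (d : ℕ) (q C : ℝ) (lam : (Fin d → ℤ) → ℂ) : Prop :=
  ∀ c : (Fin d → ℤ) → ℂ, (Function.support c).Finite →
    LqNorm d q (trigEval fun n => lam n * c n) ≤ C * sobNorm d c

/-- The Euclidean norm `|n|₂` of `n ∈ ℤ^d`. -/
def eucNorm (d : ℕ) (n : Fin d → ℤ) : ℝ := Real.sqrt (∑ i, ((n i : ℝ))^2)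

/-- The `k`-th triadic ring `R_k = {n ∈ ℤ^d : 3^k ≤ max_i |n_i| < 3^{k+1}}`. -/
def triadicRing (d k : ℕ) : Set (Fin d → ℤ) :=
  {n | 3^k ≤ Finset.univ.sup (fun i => (n i).natAbs) ∧
       Finset.univ.sup (fun i => (n i).natAbs) < 3^(k+1)}


/-- `M(ξ) = ∑_j ξ_j n_j ∈ ℤ^d` for a sign pattern `ξ ∈ {-1,0,1}^N`. -/
def Mvec {d N : ℕ} (n : Fin N → Fin d → ℤ) (ξ : Fin N → SignType) : Fin d → ℤ :=
  fun i => ∑ j, (ξ j : ℤ) * n j i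

/-- `L(ξ) = ∑_j |ξ_j|`, the number of nonzero coordinates of `ξ ∈ {-1,0,1}^N`. -/
def Lnum {N : ℕ} (ξ : Fin N → SignType) : ℕ := ∑ j, ((ξ j : ℤ)).natAbs

/-- The sequence `n₁, …, n_N` is `N`-sparse: `|n_{j+1}|₂ / |n_j|₂ ≥ 3^N`. -/
def Sparse (d N : ℕ) (n : Fin N → Fin d → ℤ) : Prop :=
  ∀ (j : ℕ) (h : j + 1 < N),
    (3:ℝ)^N * eucNorm d (n ⟨j, by omega⟩) ≤ eucNorm d (n ⟨j + 1, h⟩)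

lemma abs_le_eucNorm (d : ℕ) (v : Fin d → ℤ) (i : Fin d) : |(v i : ℝ)| ≤ eucNorm d v := by
  rw [eucNorm, ← Real.sqrt_sq_eq_abs]
  exact Real.sqrt_le_sqrt <| Finset.single_le_sum (f := fun k => (v k : ℝ) ^ 2)
    (fun k _ => sq_nonneg _) (Finset.mem_univ i)

lemma eucNorm_le_sqrt_mul_abs_of_natAbs_le (d : ℕ) (v : Fin d → ℤ) (i : Fin d)
    (hdom : ∀ k, (v k).natAbs ≤ (v i).natAbs) : eucNorm d v ≤ √d * |(v i : ℝ)| := by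
  have hsq : ∀ k, (v k : ℝ) ^ 2 ≤ (v i : ℝ) ^ 2 := fun k => by
    rw [← sq_abs, ← sq_abs (v i : ℝ)]
    have : |(v k : ℝ)| ≤ |(v i : ℝ)| := by
      simpa only [Nat.cast_natAbs, Int.cast_abs] using (Nat.cast_le (α := ℝ)).2 (hdom k)
    gcongr
  calc eucNorm d v ≤ √(d * (v i : ℝ) ^ 2) := by
        refine Real.sqrt_le_sqrt ?_
        simpa using Finset.sum_le_sum fun k (_ : k ∈ univ) => hsq k
    _ = √d * |(v i : ℝ)| := by rw [Real.sqrt_mul (Nat.cast_nonneg d), Real.sqrt_sq_eq_abs]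

/- The invariant survives a step because `a l / (r - 1) + a l = r * a l / (r - 1)`. -/
lemma sum_range_le_div_sub_one {a : ℕ → ℝ} {r : ℝ} (hr : 1 < r) (ha : 0 ≤ a 0) :
    ∀ {l : ℕ}, (∀ j < l, r * a j ≤ a (j + 1)) → ∑ j ∈ range l, a j ≤ a l / (r - 1)
  | 0, _ => by simpa using div_nonneg ha (sub_nonneg.2 hr.le)
  | l + 1, h => by
    have ih := sum_range_le_div_sub_one (l := l) hr ha fun j hj => h j (by omega)
    have hl := h l (by omega)
    rw [sum_range_succ, le_div_iff₀ (sub_pos.2 hr)] at *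
    nlinarith

lemma sum_range_le_three_div_mul {a : ℕ → ℝ} {r : ℝ} (hr : 3 ≤ r) (ha : ∀ j, 0 ≤ a j) {l : ℕ}
    (h : ∀ j < l, r * a j ≤ a (j + 1)) : ∑ j ∈ range l, a j ≤ 3 / (2 * r) * a l := by
  refine (sum_range_le_div_sub_one (by linarith) (ha 0) h).trans ?_
  rw [div_mul_eq_mul_div, div_le_div_iff₀ (by linarith) (by linarith)]
  nlinarith [ha l]

lemma abs_Mvec_apply_le_of_sparse {d N : ℕ} {n : Fin N → Fin d → ℤ} (hsp : Sparse d N n)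
    {l : Fin N} {ξ : Fin N → SignType} (hξ : ∀ k, l ≤ k → ξ k = 0) (i : Fin d) :
    |(Mvec n ξ i : ℝ)| ≤ 3 / (2 * 3 ^ N) * eucNorm d (n l) := by
  set a : ℕ → ℝ := fun j => if h : j < N then eucNorm d (n ⟨j, h⟩) else 0 with ha_def
  have ha : ∀ j, 0 ≤ a j := fun j => by
    simp only [ha_def]; split_ifs <;> simp [eucNorm, Real.sqrt_nonneg]
  have hgrow : ∀ j < (l : ℕ), (3 : ℝ) ^ N * a j ≤ a (j + 1) := fun j hj => by
    simpa [ha_def, show j < N by omega, show j + 1 < N by omega] using hsp j (by omega)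
  have hterm : ∀ j : Fin N, |((ξ j : ℤ) : ℝ) * n j i| ≤ if (j : ℕ) < l then a j else 0 := by
    intro j
    by_cases hj : (j : ℕ) < l
    · have hξj : |((ξ j : ℤ) : ℝ)| ≤ 1 := by rcases ξ j with _ | _ | _ <;> simp
      simpa [hj, ha_def, abs_mul] using
        (mul_le_of_le_one_left (abs_nonneg _) hξj).trans (abs_le_eucNorm d (n j) i)
    · simp [hj, hξ j (Fin.le_def.2 (not_lt.1 hj))]
  have h3N : (3 : ℝ) ≤ 3 ^ N := le_self_pow₀ (by norm_num) l.pos.ne'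
  calc |(Mvec n ξ i : ℝ)| = |∑ j, ((ξ j : ℤ) : ℝ) * n j i| := by simp [Mvec]
    _ ≤ ∑ j : Fin N, if (j : ℕ) < l then a j else 0 :=
        (abs_sum_le_sum_abs _ _).trans (sum_le_sum fun j _ => hterm j)
    _ = ∑ j ∈ range l, a j := by
        rw [Fin.sum_univ_eq_sum_range (fun j => if j < l then a j else 0), ← sum_filter]
        congr 1
        ext j
        simp only [mem_filter, mem_range]
        omega
    _ ≤ 3 / (2 * 3 ^ N) * a l := sum_range_le_three_div_mul h3N ha hgrow
    _ = 3 / (2 * 3 ^ N) * eucNorm d (n l) := by simp [ha_def]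

lemma Mvec_eq_add_Mvec_update {d N : ℕ} (n : Fin N → Fin d → ℤ) (ξ : Fin N → SignType)
    (l : Fin N) (i : Fin d) :
    Mvec n ξ i = ξ l * n l i + Mvec n (Function.update ξ l 0) i := by
  simp only [Mvec, ← add_sum_erase univ _ (mem_univ l), Function.update_self]
  congr 1
  simp only [SignType.coe_zero, zero_mul, zero_add]
  exact sum_congr rfl fun j hj => by rw [Function.update_of_ne (ne_of_mem_erase hj)]

/- With `l` the last index where `ξ` is nonzero, `M(ξ) = ξ_l n_l + M(ξ')` with `ξ'` vanishing
from `l` on; the dominant coordinate of `n_l` is at least `|n_l|₂ / √d`, which exceeds the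
bound on `M(ξ')`. -/
lemma Mvec_apply_ne_zero {d N : ℕ} {n : Fin N → Fin d → ℤ} (hnz : ∀ j, n j ≠ 0)
    (hsp : Sparse d N n) (hN : 3 / 2 * √d < (3 : ℝ) ^ N) (i : Fin d)
    (hdom : ∀ j k, (n j k).natAbs ≤ (n j i).natAbs) {ξ : Fin N → SignType} (hξ : ξ ≠ 0) :
    Mvec n ξ i ≠ 0 := by
  obtain ⟨l, hl, hmax⟩ := (univ.filter fun j => ξ j ≠ 0).exists_max_image id
    (by simpa [Finset.Nonempty, funext_iff] using hξ)
  simp only [mem_filter, mem_univ, true_and, id] at hl hmax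
  set ξ' := Function.update ξ l 0
  have hξ' : ∀ k, l ≤ k → ξ' k = 0 := fun k hk => by
    rcases hk.eq_or_lt with rfl | hlt
    · simp [ξ']
    · simpa [ξ', hlt.ne'] using mt (hmax k) (not_le.2 hlt)
  have hnl : n l i ≠ 0 := fun h0 =>
    hnz l (funext fun k => by simpa [h0] using hdom l k)
  intro hM
  have habs : |(n l i : ℝ)| = |(Mvec n ξ' i : ℝ)| := by
    have hsign : |((ξ l : ℤ) : ℝ)| = 1 := by rcases h : ξ l with _ | _ | _ <;> simp_all
    rw [Mvec_eq_add_Mvec_update n ξ l i, add_eq_zero_iff_eq_neg] at hM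
    rw [← one_mul |(n l i : ℝ)|, ← hsign, ← abs_mul, ← abs_neg (Mvec n ξ' i : ℝ)]
    exact_mod_cast congrArg abs hM
  have hpos : 0 < |(n l i : ℝ)| := abs_pos.2 (Int.cast_ne_zero.2 hnl)
  have h3N : (0 : ℝ) < 3 ^ N := by positivity
  have hbound := (habs ▸ abs_Mvec_apply_le_of_sparse hsp hξ' i).trans (mul_le_mul_of_nonneg_left
    (eucNorm_le_sqrt_mul_abs_of_natAbs_le d (n l) i (hdom l)) (by positivity))
  rw [div_mul_eq_mul_div, le_div_iff₀ (by positivity)] at hbound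
  nlinarith

theorem stmt8_general (d N : ℕ) (hd : 1 ≤ d)
    (n : Fin N → Fin d → ℤ) (hnz : ∀ j, n j ≠ 0) (hsp : Sparse d N n) :
    (∀ (l : Fin N) (ξ : Fin N → SignType), (∀ k : Fin N, l ≤ k → ξ k = 0) →
        ∀ i : Fin d, |((Mvec n ξ i : ℤ) : ℝ)| ≤ 3 / (2 * 3^N) * eucNorm d (n l)) ∧
    ((3:ℝ)^N > 3/2 * Real.sqrt d →
      (∀ j : Fin N, ∀ k : Fin d, (n j k).natAbs ≤ (n j ⟨0, hd⟩).natAbs) →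
      ∀ ξ : Fin N → SignType, ξ ≠ 0 → Mvec n ξ ⟨0, hd⟩ ≠ 0) :=
  ⟨fun _ _ hξ i => abs_Mvec_apply_le_of_sparse hsp hξ i,
    fun hN hdom _ hξ => Mvec_apply_ne_zero hnz hsp hN ⟨0, hd⟩ hdom hξ⟩

/-- for an `N`-sparse sequence `n₁, …, n_N ∈ ℤ^d \ {0}`: (a) for every `l` and
every `ξ ∈ {-1,0,1}^N` vanishing on indices `≥ l`, each coordinate of `M(ξ) = ∑_j ξ_j n_j`
satisfies `|M(ξ)^{(i)}| ≤ (3/(2·3^N)) |n_l|₂`; (b) if moreover `3^N > (3/2)√d` and every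
`n_j` has dominant first coordinate, then `M(ξ)^{(1)} ≠ 0` for every nonzero `ξ`. -/
theorem stmt8 (d N : ℕ) (hd : 1 ≤ d) (hN : 1 ≤ N)
    (n : Fin N → Fin d → ℤ) (hnz : ∀ j, n j ≠ 0) (hsp : Sparse d N n) :
    (∀ (l : Fin N) (ξ : Fin N → SignType), (∀ k : Fin N, l ≤ k → ξ k = 0) →
        ∀ i : Fin d, |((Mvec n ξ i : ℤ) : ℝ)| ≤ 3 / (2 * 3^N) * eucNorm d (n l)) ∧
    ((3:ℝ)^N > 3/2 * Real.sqrt d →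
      (∀ j : Fin N, ∀ k : Fin d, (n j k).natAbs ≤ (n j ⟨0, hd⟩).natAbs) →
      ∀ ξ : Fin N → SignType, ξ ≠ 0 → Mvec n ξ ⟨0, hd⟩ ≠ 0) :=
  stmt8_general d N hd n hnz hsp

end
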